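/- Let c ∈ ℝ^n have all components strictly positive and satisfy (F + V)ᵀ·c = 0. Then for every I ∈ Ω, the derivative of the Lyapunov function ⟨c, I⟩ along the vector field satisfies ⟨c, G(I)⟩ = −⟨c, diag(I)·M·I⟩ ≤ 0, and ⟨c, G(I)⟩ = 0 if and only if I = 0. -/
import Mathlib


open Matrix Filter

noncomputable section

/-- The spectral radius of a real square matrix: the supremum of the norms of its
complex eigenvalues. -/
def specRad {n : ℕ} (A : Matrix (Fin n) (Fin n) ℝ) : ℝ :=
  sSup {r : ℝ | ∃ μ ∈ spectrum ℂ (A.map (Complex.ofReal)), ‖μ‖ = r}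

/-- Irreducibility of a square matrix: no proper nonempty subset of indices is
invariant, i.e. from every such subset there is a nonzero entry leading outside of it. -/
def MatIrred {n : ℕ} (A : Matrix (Fin n) (Fin n) ℝ) : Prop :=
  ∀ S : Set (Fin n), S.Nonempty → S ≠ Set.univ → ∃ i ∈ S, ∃ j ∈ Sᶜ, A i j ≠ 0

/-- N̄ᵢ = bᵢ/dᵢ, the asymptotic population of patch i. -/
def Nbar {n : ℕ} (b d : Fin n → ℝ) : Fin n → ℝ := fun i => b i / d i

/-- Ñⱼ = ∑ₖ p_{kj} N̄ₖ, the effective population of patch j. -/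
def Ntil {n : ℕ} (P : Matrix (Fin n) (Fin n) ℝ) (b d : Fin n → ℝ) : Fin n → ℝ :=
  fun j => ∑ k, P k j * Nbar b d k

/-- M = P·diag(β)·diag(Ñ)⁻¹·Pᵀ. -/
def Mmat {n : ℕ} (P : Matrix (Fin n) (Fin n) ℝ) (β b d : Fin n → ℝ) :
    Matrix (Fin n) (Fin n) ℝ :=
  P * Matrix.diagonal β * Matrix.diagonal (fun j => (Ntil P b d j)⁻¹) * Pᵀ

/-- F = diag(N̄)·M. -/
def Fmat {n : ℕ} (P : Matrix (Fin n) (Fin n) ℝ) (β b d : Fin n → ℝ) :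
    Matrix (Fin n) (Fin n) ℝ :=
  Matrix.diagonal (Nbar b d) * Mmat P β b d

/-- V = −diag(dᵢ + γᵢ). -/
def Vmat {n : ℕ} (d γ : Fin n → ℝ) : Matrix (Fin n) (Fin n) ℝ :=
  -Matrix.diagonal (fun i => d i + γ i)

/-- The SIS vector field G(I) = diag(N̄ − I)·M·I + V·I, written componentwise. -/
def Gfield {n : ℕ} (P : Matrix (Fin n) (Fin n) ℝ) (β b d γ : Fin n → ℝ)
    (I : Fin n → ℝ) : Fin n → ℝ :=
  fun i => (Nbar b d i - I i) * (Mmat P β b d).mulVec I i - (d i + γ i) * I i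

/-- Ω = {I : 0 ≤ Iᵢ ≤ N̄ᵢ for all i}. -/
def OmegaSet {n : ℕ} (b d : Fin n → ℝ) : Set (Fin n → ℝ) :=
  {I | ∀ i, 0 ≤ I i ∧ I i ≤ Nbar b d i}

/-- The basic reproduction number R₀ = ρ(−F·V⁻¹). -/
def R0 {n : ℕ} (P : Matrix (Fin n) (Fin n) ℝ) (β b d γ : Fin n → ℝ) : ℝ :=
  specRad (-(Fmat P β b d * (Vmat d γ)⁻¹))

/-- `I : ℝ → ℝⁿ` is a solution of the SIS system on [0,∞). -/
def IsSol {n : ℕ} (P : Matrix (Fin n) (Fin n) ℝ) (β b d γ : Fin n → ℝ)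
    (I : ℝ → Fin n → ℝ) : Prop :=
  ∀ t ∈ Set.Ici (0 : ℝ), HasDerivWithinAt I (Gfield P β b d γ (I t)) (Set.Ici 0) t

lemma Mmat_apply {n : ℕ} (P : Matrix (Fin n) (Fin n) ℝ) (β b d : Fin n → ℝ) (i j : Fin n) :
    Mmat P β b d i j = ∑ k, P i k * β k * (Ntil P b d k)⁻¹ * P j k := by
  simp [Mmat, Matrix.mul_apply, Matrix.diagonal, Matrix.transpose_apply,
    Finset.sum_mul, Finset.mul_sum]

lemma Ntil_pos {n : ℕ} (P : Matrix (Fin n) (Fin n) ℝ) (b d : Fin n → ℝ)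
    (hb : ∀ i, 0 < b i) (hd : ∀ i, 0 < d i) (hP0 : ∀ i j, 0 ≤ P i j)
    (hcol : ∀ j, ∃ k, 0 < P k j) (j : Fin n) : 0 < Ntil P b d j := by
  obtain ⟨k, hk⟩ := hcol j
  have hN : ∀ i, 0 < Nbar b d i := fun i => div_pos (hb i) (hd i)
  apply Finset.sum_pos'
  · intro i _; exact mul_nonneg (hP0 i j) (hN i).le
  · exact ⟨k, Finset.mem_univ k, mul_pos hk (hN k)⟩

lemma key_identity {n : ℕ} (b d γ β : Fin n → ℝ) (P : Matrix (Fin n) (Fin n) ℝ)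
    (c I : Fin n → ℝ) :
    c ⬝ᵥ Gfield P β b d γ I =
      ((Fmat P β b d + Vmat d γ)ᵀ.mulVec c) ⬝ᵥ I
        - c ⬝ᵥ (fun i => I i * (Mmat P β b d).mulVec I i) := by
  have hG : Gfield P β b d γ I =
      (Fmat P β b d + Vmat d γ).mulVec I - fun i => I i * (Mmat P β b d).mulVec I i := by
    funext i
    simp only [Gfield, Fmat, Vmat, Pi.sub_apply, Matrix.add_mulVec, Matrix.neg_mulVec,
      Pi.add_apply, Pi.neg_apply, ← Matrix.mulVec_mulVec, Matrix.mulVec_diagonal]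
    ring
  rw [hG, dotProduct_sub, Matrix.dotProduct_mulVec, ← Matrix.mulVec_transpose]

/-- if c ≫ 0 satisfies (F + V)ᵀ·c = 0 then along the vector field the
Lyapunov function ⟨c, I⟩ satisfies ⟨c, G(I)⟩ = −⟨c, diag(I)·M·I⟩ ≤ 0 on Ω, with
equality iff I = 0. -/
theorem sis_lyapunov_derivative
    {n : ℕ} (hn : 1 ≤ n) (b d γ β : Fin n → ℝ) (P : Matrix (Fin n) (Fin n) ℝ)
    (hb : ∀ i, 0 < b i) (hd : ∀ i, 0 < d i) (hγ : ∀ i, 0 ≤ γ i) (hβ : ∀ j, 0 < β j)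
    (hP0 : ∀ i j, 0 ≤ P i j) (hP1 : ∀ i j, P i j ≤ 1)
    (hrow : ∀ i, ∑ j, P i j = 1) (hcol : ∀ j, ∃ k, 0 < P k j)
    (c : Fin n → ℝ) (hc : ∀ i, 0 < c i)
    (hker : (Fmat P β b d + Vmat d γ)ᵀ.mulVec c = 0) :
    ∀ I ∈ OmegaSet b d,
      c ⬝ᵥ Gfield P β b d γ I = -(c ⬝ᵥ fun i => I i * (Mmat P β b d).mulVec I i) ∧
      c ⬝ᵥ Gfield P β b d γ I ≤ 0 ∧
      (c ⬝ᵥ Gfield P β b d γ I = 0 ↔ I = 0) := by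
  intro I hI
  have hNt : ∀ j, 0 < Ntil P b d j := Ntil_pos P b d hb hd hP0 hcol
  have hM0 : ∀ i j, 0 ≤ Mmat P β b d i j := by
    intro i j
    rw [Mmat_apply]
    exact Finset.sum_nonneg fun k _ => mul_nonneg (mul_nonneg (mul_nonneg (hP0 i k)
      (hβ k).le) (inv_nonneg.2 (hNt k).le)) (hP0 j k)
  have hMd : ∀ i, 0 < Mmat P β b d i i := by
    intro i
    rw [Mmat_apply]
    have : ∃ k, 0 < P i k := by
      by_contra h
      push_neg at h
      have : ∑ j, P i j ≤ 0 := Finset.sum_nonpos fun j _ => h j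
      rw [hrow i] at this; linarith
    obtain ⟨k, hk⟩ := this
    apply Finset.sum_pos'
    · intro m _
      exact mul_nonneg (mul_nonneg (mul_nonneg (hP0 i m) (hβ m).le)
        (inv_nonneg.2 (hNt m).le)) (hP0 i m)
    · exact ⟨k, Finset.mem_univ k,
        mul_pos (mul_pos (mul_pos hk (hβ k)) (inv_pos.2 (hNt k))) hk⟩
  have hI0 : ∀ i, 0 ≤ I i := fun i => (hI i).1
  have hMI : ∀ i, 0 ≤ (Mmat P β b d).mulVec I i := by
    intro i
    simp only [Matrix.mulVec, dotProduct]
    exact Finset.sum_nonneg fun j _ => mul_nonneg (hM0 i j) (hI0 j)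
  have heq : c ⬝ᵥ Gfield P β b d γ I =
      -(c ⬝ᵥ fun i => I i * (Mmat P β b d).mulVec I i) := by
    rw [key_identity, hker]
    simp
  refine ⟨heq, ?_, ?_⟩
  · rw [heq]
    simp only [neg_nonpos]
    exact Finset.sum_nonneg fun i _ =>
      mul_nonneg (hc i).le (mul_nonneg (hI0 i) (hMI i))
  · constructor
    · intro h0
      rw [heq, neg_eq_zero] at h0
      have hterm : ∀ i ∈ Finset.univ, c i * (I i * (Mmat P β b d).mulVec I i) = 0 :=
        (Finset.sum_eq_zero_iff_of_nonneg fun i _ =>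
          mul_nonneg (hc i).le (mul_nonneg (hI0 i) (hMI i))).1 h0
      funext i
      have hti := hterm i (Finset.mem_univ i)
      have hlow : Mmat P β b d i i * I i ≤ (Mmat P β b d).mulVec I i := by
        have h : Mmat P β b d i i * I i = ∑ j ∈ {i}, Mmat P β b d i j * I j := by simp
        simp only [Matrix.mulVec, dotProduct]
        rw [h]
        exact Finset.sum_le_sum_of_subset_of_nonneg (Finset.subset_univ _)
          (fun j _ _ => mul_nonneg (hM0 i j) (hI0 j))
      by_contra hne
      have hIpos : 0 < I i := lt_of_le_of_ne (hI0 i) (Ne.symm hne)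
      have h1 : 0 < (Mmat P β b d).mulVec I i :=
        lt_of_lt_of_le (mul_pos (hMd i) hIpos) hlow
      have : 0 < c i * (I i * (Mmat P β b d).mulVec I i) :=
        mul_pos (hc i) (mul_pos hIpos h1)
      rw [hti] at this; exact lt_irrefl 0 this
    · intro h0
      subst h0
      simp [Gfield, Matrix.mulVec_zero, dotProduct]
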